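/- arXiv:2012.14198 — 2 statements merged into one kernel-verified Lean document; each statement's English description precedes it below -/
import Mathlib

section
/- For each j = 1, …, n and all Z, Z′ ∈ ℝ^{2n}: applying b_j⁺ to 𝒫(·,Z′) in the first variable gives 0, and applying b_j to 𝒫(·,Z′) in the first variable gives a_j (z̄_j − conj(z′_j)) 𝒫(Z,Z′); that is, (b_j⁺𝒫)(Z,Z′) = 0 and (b_j𝒫)(Z,Z′) = a_j(z̄_j − conj(z′_j))𝒫(Z,Z′). -/
/-! Along the `j`-th complex coordinate, the real derivative of `𝒫(·, Z′)` at `Z` has the form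
`c ↦ α c + β c̄` with `α = -(a_j/4)(z̄_j - 2 z̄′_j) 𝒫(Z, Z′)` and `β = -(a_j/4) z_j 𝒫(Z, Z′)`; the
Wirtinger derivatives `∂/∂z_j` and `∂/∂z̄_j` pick out `α` and `β`, so the zeroth-order terms of
`b_j⁺` cancel and those of `b_j` combine to `a_j (z̄_j - z̄′_j) 𝒫(Z, Z′)`. -/

open MeasureTheory Complex Finset Function

noncomputable section

variable {n : ℕ}

/-- Wirtinger derivative `∂/∂z_j`. -/
def wdz (j : Fin n) (u : (Fin n → ℂ) → ℂ) (Z : Fin n → ℂ) : ℂ :=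
  (1 / 2 : ℂ) * (fderiv ℝ u Z (Pi.single j 1) - Complex.I * fderiv ℝ u Z (Pi.single j Complex.I))

/-- Wirtinger derivative `∂/∂z̄_j`. -/
def wdzbar (j : Fin n) (u : (Fin n → ℂ) → ℂ) (Z : Fin n → ℂ) : ℂ :=
  (1 / 2 : ℂ) * (fderiv ℝ u Z (Pi.single j 1) + Complex.I * fderiv ℝ u Z (Pi.single j Complex.I))

/-- The operator `b_j = -2 ∂/∂z_j + (1/2) a_j z̄_j`. -/
def opb (a : Fin n → ℝ) (j : Fin n) (u : (Fin n → ℂ) → ℂ) (Z : Fin n → ℂ) : ℂ :=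
  -2 * wdz j u Z + (1 / 2 : ℂ) * (a j : ℂ) * (starRingEnd ℂ) (Z j) * u Z

/-- The operator `b_j⁺ = 2 ∂/∂z̄_j + (1/2) a_j z_j`. -/
def opbplus (a : Fin n → ℝ) (j : Fin n) (u : (Fin n → ℂ) → ℂ) (Z : Fin n → ℂ) : ℂ :=
  2 * wdzbar j u Z + (1 / 2 : ℂ) * (a j : ℂ) * Z j * u Z

/-- The operator `b̄_j = -2 ∂/∂z̄_j + (1/2) a_j z_j`. -/
def opbbar (a : Fin n → ℝ) (j : Fin n) (u : (Fin n → ℂ) → ℂ) (Z : Fin n → ℂ) : ℂ :=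
  -2 * wdzbar j u Z + (1 / 2 : ℂ) * (a j : ℂ) * Z j * u Z

/-- The operator `b̄_j⁺ = 2 ∂/∂z_j + (1/2) a_j z̄_j`. -/
def opbbarplus (a : Fin n → ℝ) (j : Fin n) (u : (Fin n → ℂ) → ℂ) (Z : Fin n → ℂ) : ℂ :=
  2 * wdz j u Z + (1 / 2 : ℂ) * (a j : ℂ) * (starRingEnd ℂ) (Z j) * u Z

/-- `b^k = b_1^{k_1} ∘ ⋯ ∘ b_n^{k_n}`. -/
def bPow (a : Fin n → ℝ) (k : Fin n → ℕ) : ((Fin n → ℂ) → ℂ) → (Fin n → ℂ) → ℂ :=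
  ((List.finRange n).map fun j => (opb a j)^[k j]).foldr (· ∘ ·) id

/-- `(b̄)^k = b̄_1^{k_1} ∘ ⋯ ∘ b̄_n^{k_n}`. -/
def bbarPow (a : Fin n → ℝ) (k : Fin n → ℕ) : ((Fin n → ℂ) → ℂ) → (Fin n → ℂ) → ℂ :=
  ((List.finRange n).map fun j => (opbbar a j)^[k j]).foldr (· ∘ ·) id

/-- The Bergman kernel `𝒫(Z,Z′)`. -/
def bergman (a : Fin n → ℝ) (Z Z' : Fin n → ℂ) : ℂ :=
  ((((2 * Real.pi) ^ n)⁻¹ * ∏ j, a j : ℝ) : ℂ) *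
    Complex.exp (-(1 / 4 : ℂ) * ∑ m, (a m : ℂ) *
      (((‖Z m‖ ^ 2 : ℝ) : ℂ) + ((‖Z' m‖ ^ 2 : ℝ) : ℂ) -
        2 * Z m * (starRingEnd ℂ) (Z' m)))

/-- The Landau level `Λ_k = Σ_j (2k_j+1) a_j`. -/
def Lam (a : Fin n → ℝ) (k : Fin n → ℕ) : ℝ := ∑ j, (2 * (k j : ℝ) + 1) * a j

/-- The kernel `P_{Λ_k}(Z,Z′) = (2^{|k|} a^k k!)⁻¹ b^k_Z (b̄)^k_{Z′} 𝒫(Z,Z′)`. -/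
def PLam (a : Fin n → ℝ) (k : Fin n → ℕ) (Z Z' : Fin n → ℂ) : ℂ :=
  (((2 ^ (∑ j, k j) * (∏ j, a j ^ k j) * ∏ j, (Nat.factorial (k j) : ℝ) : ℝ)⁻¹ : ℝ) : ℂ) *
    bPow a k (fun W => bbarPow a k (fun W' => bergman a W W') Z') Z

/-- The integral operator `P_{Λ_k}` acting on functions. -/
def Pop (a : Fin n → ℝ) (k : Fin n → ℕ) (u : (Fin n → ℂ) → ℂ) (Z : Fin n → ℂ) : ℂ :=
  ∫ Z', PLam a k Z Z' * u Z'

/-- `k + e_j`. -/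
def addE (k : Fin n → ℕ) (j : Fin n) : Fin n → ℕ := Function.update k j (k j + 1)

/-- `k - e_j` (only used when `k j ≠ 0`). -/
def subE (k : Fin n → ℕ) (j : Fin n) : Fin n → ℕ := Function.update k j (k j - 1)

/-- The functions `φ_β`. -/
def phiB (a : Fin n → ℝ) (β : Fin n → ℕ) (Z : Fin n → ℂ) : ℂ :=
  ((Real.sqrt ((∏ j, a j ^ β j) * (∏ j, a j) /
      ((2 * Real.pi) ^ n * 2 ^ (∑ j, β j) * ∏ j, (Nat.factorial (β j) : ℝ))) : ℝ) : ℂ) *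
    (∏ j, Z j ^ β j) *
    Complex.exp (-(1 / 4 : ℂ) * ∑ j, (a j : ℂ) * ((‖Z j‖ ^ 2 : ℝ) : ℂ))

/-- The functions `φ_{k,β} = (2^{|k|} a^k k!)^{-1/2} b^k φ_β`. -/
def phiKB (a : Fin n → ℝ) (k β : Fin n → ℕ) (Z : Fin n → ℂ) : ℂ :=
  (((Real.sqrt (2 ^ (∑ j, k j) * (∏ j, a j ^ k j) * ∏ j, (Nat.factorial (k j) : ℝ)))⁻¹ : ℝ) : ℂ) *
    bPow a k (phiB a β) Z

/-- `∂/∂Z_{2j-1} + (i/2) a_j Z_{2j}`. -/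
def opAA (a : Fin n → ℝ) (j : Fin n) (u : (Fin n → ℂ) → ℂ) (Z : Fin n → ℂ) : ℂ :=
  fderiv ℝ u Z (Pi.single j 1) + (Complex.I / 2) * (a j : ℂ) * ((Z j).im : ℂ) * u Z

/-- `∂/∂Z_{2j} - (i/2) a_j Z_{2j-1}`. -/
def opBB (a : Fin n → ℝ) (j : Fin n) (u : (Fin n → ℂ) → ℂ) (Z : Fin n → ℂ) : ℂ :=
  fderiv ℝ u Z (Pi.single j Complex.I) - (Complex.I / 2) * (a j : ℂ) * ((Z j).re : ℂ) * u Z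

/-- The model operator `ℋ⁰`. -/
def H0 (a : Fin n → ℝ) (u : (Fin n → ℂ) → ℂ) (Z : Fin n → ℂ) : ℂ :=
  ∑ j, (-(opAA a j (opAA a j u) Z) - opBB a j (opBB a j u) Z)

/-- Generalized Laguerre polynomial `L^{(m)}_k`. -/
def laguerre (m k : ℕ) (x : ℂ) : ℂ :=
  ∑ j ∈ Finset.range (k + 1), (Nat.choose (k + m) (k - j) : ℂ) * (-x) ^ j / (Nat.factorial j : ℂ)

/-- The kernel of `P_Λ = Σ_{k ∈ K_Λ} P_{Λ_k}`. -/
def PLamL (a : Fin n → ℝ) (Λ : ℝ) (Z Z' : Fin n → ℂ) : ℂ :=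
  ∑' k : Fin n → ℕ, if Lam a k = Λ then PLam a k Z Z' else 0

/-- The integral operator `P_Λ` acting on functions. -/
def PopL (a : Fin n → ℝ) (Λ : ℝ) (u : (Fin n → ℂ) → ℂ) (Z : Fin n → ℂ) : ℂ :=
  ∫ Z', PLamL a Λ Z Z' * u Z'

open ComplexConjugate

section Wirtinger

variable {u : (Fin n → ℂ) → ℂ} {Z : Fin n → ℂ} {j : Fin n} {α β : ℂ}

theorem wdz_eq_of_fderiv_single (h : ∀ c, fderiv ℝ u Z (Pi.single j c) = α * c + β * conj c) :
    wdz j u Z = α := by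
  simp only [wdz, h, map_one, conj_I]
  linear_combination (β - α) / 2 * I_sq

theorem wdzbar_eq_of_fderiv_single
    (h : ∀ c, fderiv ℝ u Z (Pi.single j c) = α * c + β * conj c) :
    wdzbar j u Z = β := by
  simp only [wdzbar, h, map_one, conj_I]
  linear_combination (α - β) / 2 * I_sq

end Wirtinger

theorem bergman_eq_mul_exp (a : Fin n → ℝ) (W Z' : Fin n → ℂ) :
    bergman a W Z' = ((((2 * Real.pi) ^ n)⁻¹ * ∏ j, a j : ℝ) : ℂ) *
      exp (-(1 / 4 : ℂ) * ∑ m, (a m : ℂ) *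
        (W m * conj (W m) + Z' m * conj (Z' m) - 2 * W m * conj (Z' m))) := by
  simp only [bergman, ← mul_conj', ofReal_pow]

theorem fderiv_bergman_apply (a : Fin n → ℝ) (Z Z' v : Fin n → ℂ) :
    fderiv ℝ (fun W => bergman a W Z') Z v = -(1 / 4 : ℂ) * bergman a Z Z' *
      ∑ m, (a m : ℂ) * (conj (Z m) * v m + Z m * conj (v m) - 2 * conj (Z' m) * v m) := by
  have hcoord (m : Fin n) : HasFDerivAt (fun W : Fin n → ℂ => W m)
      (ContinuousLinearMap.proj (R := ℝ) m) Z := hasFDerivAt_apply m Z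
  have hconj (m : Fin n) : HasFDerivAt (fun W : Fin n → ℂ => conj (W m))
      (conjCLE.toContinuousLinearMap.comp (ContinuousLinearMap.proj m)) Z :=
    conjCLE.toContinuousLinearMap.hasFDerivAt.comp Z (hcoord m)
  have hterm (m : Fin n) := ((((hcoord m).fun_mul (hconj m)).add_const (Z' m * conj (Z' m))).fun_sub
      (((hcoord m).const_mul 2).mul_const (conj (Z' m)))).const_mul (a m : ℂ)
  have hexponent := (HasFDerivAt.fun_sum (u := univ) fun m _ => hterm m).const_mul (-(1 / 4 : ℂ))
  rw [funext (bergman_eq_mul_exp a · Z'), (hexponent.cexp.const_mul _).fderiv, bergman_eq_mul_exp]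
  simp only [smul_apply, _root_.sum_apply, sub_apply, add_apply, ContinuousLinearMap.comp_apply,
    ContinuousLinearMap.proj_apply, ContinuousLinearEquiv.coe_coe, conjCLE_apply, smul_eq_mul]
  have hsummand (m : Fin n) : (a m : ℂ) * (Z m * conj (v m) + conj (Z m) * v m - conj (Z' m) * (2 * v m))
      = a m * (conj (Z m) * v m + Z m * conj (v m) - 2 * conj (Z' m) * v m) := by ring
  simp only [hsummand]
  ring

theorem fderiv_bergman_single (a : Fin n → ℝ) (Z Z' : Fin n → ℂ) (j : Fin n) (c : ℂ) :
    fderiv ℝ (fun W => bergman a W Z') Z (Pi.single j c) =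
      -(1 / 4 : ℂ) * a j * (conj (Z j) - 2 * conj (Z' j)) * bergman a Z Z' * c +
        -(1 / 4 : ℂ) * a j * Z j * bergman a Z Z' * conj c := by
  rw [fderiv_bergman_apply, sum_eq_single j (fun m _ hm => by simp [Pi.single_eq_of_ne hm])
    (fun h => absurd (mem_univ j) h)]
  simp only [Pi.single_eq_same]
  ring

theorem b_on_bergman_general
    (n : ℕ) (a : Fin n → ℝ)
    (j : Fin n) (Z Z' : Fin n → ℂ) :
    opbplus a j (fun W => bergman a W Z') Z = 0 ∧
    opb a j (fun W => bergman a W Z') Z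
      = (a j : ℂ) * ((starRingEnd ℂ) (Z j) - (starRingEnd ℂ) (Z' j)) * bergman a Z Z' := by
  have hsingle := fderiv_bergman_single a Z Z' j
  constructor
  · rw [opbplus, wdzbar_eq_of_fderiv_single hsingle]
    ring
  · rw [opb, wdz_eq_of_fderiv_single hsingle]
    ring

theorem b_on_bergman
    (n : ℕ) (hn : 1 ≤ n) (a : Fin n → ℝ) (ha : ∀ j, 0 < a j)
    (j : Fin n) (Z Z' : Fin n → ℂ) :
    opbplus a j (fun W => bergman a W Z') Z = 0 ∧
    opb a j (fun W => bergman a W Z') Z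
      = (a j : ℂ) * ((starRingEnd ℂ) (Z j) - (starRingEnd ℂ) (Z' j)) * bergman a Z Z' :=
  b_on_bergman_general n a j Z Z'
end
end

section
/- (Explicit formula for the Landau-level projection kernel.) For every multi-index k ∈ (ℤ≥0)^n and all Z, Z′ ∈ ℝ^{2n}, P_{Λ_k}(Z,Z′) = (2π)^{−n} (∏_{j=1}^n a_j L_{k_j}( a_j|z_j − z′_j|²/2 )) · exp(−(1/4) Σ_{m=1}^n a_m (|z_m|² + |z′_m|² − 2 z_m conj(z′_m))), where L_k denotes the k-th Laguerre polynomial L_k(x) = Σ_{j=0}^{k} binom(k, k−j)(−x)^j/j!. -/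
open MeasureTheory Complex Finset Function

noncomputable section

variable {n : ℕ}

/-!
Everything factorises over the coordinates: `𝒫` is a constant times a product of one-variable
kernels `𝒫₁(w, z') = exp(-α(|w|² + |z'|² - 2 w z̄')/4)`, and `b_j`, `b̄_j` only see the `j`-th
factor. In one variable, `b̄` (in `z'`) multiplies `𝒫₁` by `α (z' - w)` and kills holomorphic
factors, so `b̄^k 𝒫₁ = α^k (z' - w)^k 𝒫₁`. On `u^p v^q 𝒫₁`, with `u = z' - w` and `v = w̄ - z̄'`,
`b` (in `w`) acts as `2 ∂_u + α v`; the two terms commute, so by the binomial theorem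
`b^k (u^k 𝒫₁) = Σ_j C(k,j) 2^(k-j) k!/j! (α u v)^j 𝒫₁ = 2^k k! L_k(α |w - z'|²/2) 𝒫₁`,
because `u v = -|w - z'|²`.
-/

open ComplexConjugate
open scoped Nat

namespace LandauLevel

/-- The real differential of a function whose Wirtinger derivatives are `d₁` and `d₂`. -/
def wirtingerCLM (d₁ d₂ : ℂ) : ℂ →L[ℝ] ℂ :=
  d₁ • ContinuousLinearMap.id ℝ ℂ + d₂ • (conjCLE : ℂ →L[ℝ] ℂ)

@[simp] lemma wirtingerCLM_apply (d₁ d₂ h : ℂ) : wirtingerCLM d₁ d₂ h = d₁ * h + d₂ * conj h := by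
  simp [wirtingerCLM]

def wirtingerDz (f : ℂ → ℂ) (z : ℂ) : ℂ :=
  (1 / 2 : ℂ) * (fderiv ℝ f z 1 - I * fderiv ℝ f z I)

def wirtingerDzbar (f : ℂ → ℂ) (z : ℂ) : ℂ :=
  (1 / 2 : ℂ) * (fderiv ℝ f z 1 + I * fderiv ℝ f z I)

section Wirtinger

variable {f : ℂ → ℂ} {d d₁ d₂ z : ℂ}

lemma wirtingerDz_eq_of_hasFDerivAt (h : HasFDerivAt f (wirtingerCLM d₁ d₂) z) :
    wirtingerDz f z = d₁ := by
  rw [wirtingerDz, h.fderiv]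
  simp only [wirtingerCLM_apply, map_one, conj_I]
  linear_combination (-(1 / 2) * d₁ + 1 / 2 * d₂) * I_sq

lemma wirtingerDzbar_eq_of_hasFDerivAt (h : HasFDerivAt f (wirtingerCLM d₁ d₂) z) :
    wirtingerDzbar f z = d₂ := by
  rw [wirtingerDzbar, h.fderiv]
  simp only [wirtingerCLM_apply, map_one, conj_I]
  linear_combination (1 / 2 * d₁ - 1 / 2 * d₂) * I_sq

lemma hasFDerivAt_wirtingerCLM_of_hasDerivAt (h : HasDerivAt f d z) :
    HasFDerivAt f (wirtingerCLM d 0) z :=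
  (h.hasFDerivAt.restrictScalars ℝ).congr_fderiv <| by ext; simp [mul_comm]

lemma hasFDerivAt_comp_conj_of_hasDerivAt (h : HasDerivAt f d (conj z)) :
    HasFDerivAt (fun w => f (conj w)) (wirtingerCLM 0 d) z :=
  ((h.hasFDerivAt.restrictScalars ℝ).comp z conjCLE.hasFDerivAt).congr_fderiv <| by
    ext; simp [mul_comm]

end Wirtinger

def gaussMonomial (c : ℂ) (p q : ℕ) (ε β γ δ : ℂ) (z : ℂ) : ℂ :=
  (c - z) ^ p * (conj z - conj c) ^ q * exp (ε * (z * conj z) + β * z + γ * conj z + δ)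

lemma hasFDerivAt_gaussMonomial (c : ℂ) (p q : ℕ) (ε β γ δ z : ℂ) :
    HasFDerivAt (gaussMonomial c p q ε β γ δ)
      (wirtingerCLM
        ((-p * (c - z) ^ (p - 1) * (conj z - conj c) ^ q
            + (c - z) ^ p * (conj z - conj c) ^ q * (ε * conj z + β)) *
          exp (ε * (z * conj z) + β * z + γ * conj z + δ))
        ((q * (c - z) ^ p * (conj z - conj c) ^ (q - 1)
            + (c - z) ^ p * (conj z - conj c) ^ q * (ε * z + γ)) *
          exp (ε * (z * conj z) + β * z + γ * conj z + δ))) z := by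
  have hid : HasFDerivAt (fun z : ℂ => z) (wirtingerCLM 1 0) z :=
    hasFDerivAt_wirtingerCLM_of_hasDerivAt (hasDerivAt_id z)
  have hconj : HasFDerivAt (fun z : ℂ => conj z) (wirtingerCLM 0 1) z :=
    hasFDerivAt_comp_conj_of_hasDerivAt (hasDerivAt_id (conj z))
  have hpow : HasFDerivAt (fun z : ℂ => (c - z) ^ p)
      (wirtingerCLM (p * (c - z) ^ (p - 1) * (-1)) 0) z :=
    hasFDerivAt_wirtingerCLM_of_hasDerivAt (((hasDerivAt_id z).const_sub c).pow p)
  have hpow' : HasFDerivAt (fun z : ℂ => (conj z - conj c) ^ q)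
      (wirtingerCLM 0 (q * (conj z - conj c) ^ (q - 1) * 1)) z :=
    hasFDerivAt_comp_conj_of_hasDerivAt (((hasDerivAt_id (conj z)).sub_const (conj c)).pow q)
  have hexp := ((((hid.mul hconj).const_mul ε).add (hid.const_mul β)).add
    (hconj.const_mul γ)).add_const δ |>.cexp
  refine ((hpow.mul hpow').mul hexp).congr_fderiv ?_
  ext
  simp only [wirtingerCLM_apply, add_apply, smul_apply,
    smul_eq_mul, Pi.mul_apply, Pi.add_apply]
  ring

lemma differentiable_gaussMonomial (c : ℂ) (p q : ℕ) (ε β γ δ : ℂ) :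
    Differentiable ℝ (gaussMonomial c p q ε β γ δ) :=
  fun z => (hasFDerivAt_gaussMonomial c p q ε β γ δ z).differentiableAt

def opb1 (α : ℂ) (f : ℂ → ℂ) (z : ℂ) : ℂ :=
  -2 * wirtingerDz f z + (1 / 2 : ℂ) * α * conj z * f z

def opbbar1 (α : ℂ) (f : ℂ → ℂ) (z : ℂ) : ℂ :=
  -2 * wirtingerDzbar f z + (1 / 2 : ℂ) * α * z * f z

lemma opb1_sum_mul {ι : Type*} (α : ℂ) (s : Finset ι) (b : ι → ℂ) {F : ι → ℂ → ℂ}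
    (hF : ∀ i ∈ s, Differentiable ℝ (F i)) :
    opb1 α (fun z => ∑ i ∈ s, b i * F i z) = fun z => ∑ i ∈ s, b i * opb1 α (F i) z := by
  funext z
  have hderiv : ∀ h, fderiv ℝ (fun z => ∑ i ∈ s, b i * F i z) z h
      = ∑ i ∈ s, b i * fderiv ℝ (F i) z h := fun h => by
    rw [fderiv_fun_sum fun i hi => ((hF i hi z).const_mul (b i))]
    simp only [_root_.sum_apply]
    exact sum_congr rfl fun i hi => by simp [fderiv_const_mul (hF i hi z)]
  simp only [opb1, wirtingerDz, hderiv, mul_sum, ← sum_add_distrib, ← sum_sub_distrib]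
  refine sum_congr rfl fun i _ => by ring

lemma opbbar1_const_mul (α b : ℂ) {f : ℂ → ℂ} (hf : Differentiable ℝ f) :
    opbbar1 α (fun z => b * f z) = fun z => b * opbbar1 α f z := by
  funext z
  simp only [opbbar1, wirtingerDzbar, fderiv_const_mul (hf z), smul_apply, smul_eq_mul]
  ring

/-- `(c - z)^p (z̄ - c̄)^q 𝒫₁(z, c)`. -/
def leftMonomial (α c : ℂ) (p q : ℕ) : ℂ → ℂ :=
  gaussMonomial c p q (-(1 / 4) * α) ((1 / 2) * α * conj c) 0 (-(1 / 4) * α * (c * conj c))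

/-- `(c - z)^p 𝒫₁(c, z)`. -/
def rightMonomial (α c : ℂ) (p : ℕ) : ℂ → ℂ :=
  gaussMonomial c p 0 (-(1 / 4) * α) 0 ((1 / 2) * α * c) (-(1 / 4) * α * (c * conj c))

lemma differentiable_leftMonomial (α c : ℂ) (p q : ℕ) : Differentiable ℝ (leftMonomial α c p q) :=
  differentiable_gaussMonomial _ _ _ _ _ _ _

lemma differentiable_rightMonomial (α c : ℂ) (p : ℕ) : Differentiable ℝ (rightMonomial α c p) :=
  differentiable_gaussMonomial _ _ _ _ _ _ _

lemma opb1_leftMonomial (α c : ℂ) (p q : ℕ) :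
    opb1 α (leftMonomial α c p q) =
      fun z => 2 * p * leftMonomial α c (p - 1) q z + α * leftMonomial α c p (q + 1) z := by
  funext z
  unfold leftMonomial
  rw [opb1, wirtingerDz_eq_of_hasFDerivAt (hasFDerivAt_gaussMonomial ..)]
  simp only [gaussMonomial, pow_succ]
  ring

lemma opbbar1_rightMonomial (α c : ℂ) (p : ℕ) :
    opbbar1 α (rightMonomial α c p) = fun z => -α * rightMonomial α c (p + 1) z := by
  funext z
  unfold rightMonomial
  rw [opbbar1, wirtingerDzbar_eq_of_hasFDerivAt (hasFDerivAt_gaussMonomial ..)]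
  simp only [gaussMonomial, pow_succ, pow_zero, Nat.cast_zero]
  ring

lemma iterate_opbbar1_rightMonomial (α c : ℂ) (t : ℕ) :
    (opbbar1 α)^[t] (rightMonomial α c 0) = fun z => (-α) ^ t * rightMonomial α c t z := by
  induction t with
  | zero => funext z; simp
  | succ t ih =>
    rw [iterate_succ_apply', ih, opbbar1_const_mul _ _ (differentiable_rightMonomial α c t),
      opbbar1_rightMonomial]
    funext z
    ring

lemma neg_pow_mul_rightMonomial (α w z' : ℂ) (κ : ℕ) :
    (-α) ^ κ * rightMonomial α w κ z' = α ^ κ * leftMonomial α z' κ 0 w := by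
  simp only [leftMonomial, rightMonomial, gaussMonomial, pow_zero, mul_one]
  rw [← mul_assoc, ← mul_pow, show -α * (w - z') = α * (z' - w) by ring, mul_pow, mul_assoc]
  congr 3
  ring

/-- Coefficients of the binomial expansion of `(2 ∂_u + α v)^m u^p`. -/
def iterateCoeff (p m i : ℕ) (α : ℂ) : ℂ :=
  m.choose i * 2 ^ i * p.descFactorial i * α ^ (m - i)

lemma iterateCoeff_succ_succ (p m i : ℕ) (h : i ≤ m) (α : ℂ) :
    iterateCoeff p (m + 1) (i + 1) α
      = 2 * (p - i : ℕ) * iterateCoeff p m i α + α * iterateCoeff p m (i + 1) α := by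
  rcases h.eq_or_lt with rfl | h
  · simp only [iterateCoeff, Nat.choose_self, Nat.choose_succ_self, Nat.descFactorial_succ,
      Nat.sub_self, Nat.cast_zero]
    push_cast
    ring
  · obtain ⟨d, rfl⟩ := Nat.exists_eq_add_of_lt h
    simp only [iterateCoeff, Nat.choose_succ_succ, Nat.descFactorial_succ,
      show i + d + 1 + 1 - (i + 1) = d + 1 by omega, show i + d + 1 - i = d + 1 by omega,
      show i + d + 1 - (i + 1) = d by omega]
    push_cast
    ring

lemma iterateCoeff_self_succ (p m : ℕ) (α : ℂ) : iterateCoeff p m (m + 1) α = 0 := by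
  simp [iterateCoeff]

lemma sum_iterateCoeff_succ (p m : ℕ) (α : ℂ) (G : ℕ → ℕ → ℂ) :
    ∑ i ∈ range (m + 1),
        iterateCoeff p m i α * (2 * (p - i : ℕ) * G (i + 1) (m - i) + α * G i (m - i + 1))
      = ∑ i ∈ range (m + 2), iterateCoeff p (m + 1) i α * G i (m + 1 - i) := by
  have hraise : ∑ i ∈ range (m + 1), iterateCoeff p m i α * (α * G i (m - i + 1))
      = α * iterateCoeff p m 0 α * G 0 (m + 1)
        + ∑ i ∈ range (m + 1), α * iterateCoeff p m (i + 1) α * G (i + 1) (m - i) := by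
    rw [sum_range_succ', sum_range_succ (fun i => α * iterateCoeff p m (i + 1) α * _) m,
      iterateCoeff_self_succ, mul_zero, zero_mul, add_zero, add_comm, Nat.sub_zero]
    congr 1
    · ring
    refine sum_congr rfl fun i hi => ?_
    rw [show m - (i + 1) + 1 = m - i by have := mem_range.mp hi; omega]
    ring
  have hsplit : ∀ i ∈ range (m + 1),
      iterateCoeff p (m + 1) (i + 1) α * G (i + 1) (m + 1 - (i + 1))
        = iterateCoeff p m i α * (2 * (p - i : ℕ) * G (i + 1) (m - i))
          + α * iterateCoeff p m (i + 1) α * G (i + 1) (m - i) := fun i hi => by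
    rw [iterateCoeff_succ_succ p m i (by have := mem_range.mp hi; omega), Nat.add_sub_add_right]
    ring
  have hzero : iterateCoeff p (m + 1) 0 α = α * iterateCoeff p m 0 α := by
    simp only [iterateCoeff, Nat.choose_zero_right, Nat.sub_zero, pow_succ]
    ring
  rw [sum_range_succ' _ (m + 1), sum_congr rfl hsplit, sum_add_distrib, hzero, Nat.sub_zero]
  simp only [mul_add, sum_add_distrib]
  linear_combination hraise

lemma iterate_opb1_leftMonomial (α c : ℂ) (p m : ℕ) :
    (opb1 α)^[m] (leftMonomial α c p 0) =
      fun z => ∑ i ∈ range (m + 1), iterateCoeff p m i α * leftMonomial α c (p - i) (m - i) z := by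
  induction m with
  | zero => funext z; simp [iterateCoeff]
  | succ m ih =>
    rw [iterate_succ_apply', ih,
      opb1_sum_mul α _ _ fun i _ => differentiable_leftMonomial α c (p - i) (m - i)]
    funext z
    simp only [opb1_leftMonomial, Nat.sub_sub]
    exact sum_iterateCoeff_succ p m α fun i j => leftMonomial α c (p - i) j z

lemma sum_iterateCoeff_mul_pow (κ : ℕ) (α x : ℂ) :
    ∑ i ∈ range (κ + 1), iterateCoeff κ κ i α * x ^ (κ - i)
      = 2 ^ κ * κ ! * laguerre 0 κ (-(α * x) / 2) := by
  rw [laguerre, ← sum_range_reflect, mul_sum]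
  refine sum_congr rfl fun i hi => ?_
  obtain ⟨j, rfl⟩ := Nat.exists_eq_add_of_le (Nat.lt_succ_iff.mp (mem_range.mp hi))
  have hfact : (i ! : ℂ) * (i + j).descFactorial j = (i + j)! := by
    have := Nat.factorial_mul_descFactorial (Nat.le_add_left j i)
    rw [Nat.add_sub_cancel] at this
    exact_mod_cast this
  simp only [iterateCoeff, Nat.add_zero, show i + j + 1 - 1 - i = j by omega,
    show i + j - i = j by omega, show i + j - j = i by omega, neg_div, neg_neg, div_pow]
  have hi_fact : (i ! : ℂ) ≠ 0 := Nat.cast_ne_zero.mpr i.factorial_ne_zero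
  rw [← hfact]
  field_simp
  rw [pow_add]
  ring

lemma leftMonomial_self (α c z : ℂ) (i : ℕ) :
    leftMonomial α c i i z = (-((‖z - c‖ ^ 2 : ℝ) : ℂ)) ^ i * leftMonomial α c 0 0 z := by
  rw [ofReal_pow, ← mul_conj', map_sub,
    show -((z - c) * (conj z - conj c)) = (c - z) * (conj z - conj c) by ring]
  simp only [leftMonomial, gaussMonomial, pow_zero, one_mul, mul_pow, mul_assoc]

lemma iterate_opb1_leftMonomial_self (α c z : ℂ) (κ : ℕ) :
    (opb1 α)^[κ] (leftMonomial α c κ 0) z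
      = 2 ^ κ * κ ! * laguerre 0 κ (α * ((‖z - c‖ ^ 2 : ℝ) : ℂ) / 2) * leftMonomial α c 0 0 z := by
  rw [iterate_opb1_leftMonomial]
  simp only [fun i => leftMonomial_self α c z (κ - i), ← mul_assoc, ← sum_mul,
    sum_iterateCoeff_mul_pow, mul_neg, neg_neg]

def coordProd (c : ℂ) (g : Fin n → ℂ → ℂ) (W : Fin n → ℂ) : ℂ := c * ∏ m, g m (W m)

lemma coordProd_update (c : ℂ) (g : Fin n → ℂ → ℂ) (j : Fin n) (F : ℂ → ℂ) (W : Fin n → ℂ) :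
    coordProd c (update g j F) W = c * (F (W j) * ∏ m ∈ univ.erase j, g m (W m)) := by
  rw [coordProd, ← mul_prod_erase univ _ (mem_univ j), update_self]
  congr 2
  exact prod_congr rfl fun m hm => by rw [update_of_ne (ne_of_mem_erase hm)]

lemma coordProd_eq_mul_prod_erase (c : ℂ) (g : Fin n → ℂ → ℂ) (j : Fin n) (W : Fin n → ℂ) :
    coordProd c g W = c * (g j (W j) * ∏ m ∈ univ.erase j, g m (W m)) := by
  simpa using coordProd_update c g j (g j) W

lemma fderiv_coordProd_single (c : ℂ) {g : Fin n → ℂ → ℂ} (hg : ∀ m, Differentiable ℝ (g m))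
    (W : Fin n → ℂ) (j : Fin n) (h : ℂ) :
    fderiv ℝ (coordProd c g) W (Pi.single j h)
      = c * (fderiv ℝ (g j) (W j) h * ∏ m ∈ univ.erase j, g m (W m)) := by
  have hfactor : ∀ m, HasFDerivAt (fun W : Fin n → ℂ => g m (W m))
      ((fderiv ℝ (g m) (W m)).comp (ContinuousLinearMap.proj m)) W := fun m =>
    (hg m (W m)).hasFDerivAt.comp W (hasFDerivAt_apply m W)
  rw [show coordProd c g = fun W => c * ∏ m, g m (W m) from rfl,
    ((HasFDerivAt.finsetProd fun m _ => hfactor m).const_mul c).fderiv]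
  simp only [smul_apply, _root_.sum_apply, ContinuousLinearMap.comp_apply,
    ContinuousLinearMap.proj_apply, smul_eq_mul]
  rw [sum_eq_single j (fun m _ hm => by rw [Pi.single_eq_of_ne hm, map_zero, mul_zero])
    (fun hj => absurd (mem_univ j) hj), Pi.single_eq_same]
  ring

def ActsCoordwise (T : Fin n → ((Fin n → ℂ) → ℂ) → (Fin n → ℂ) → ℂ)
    (t : Fin n → (ℂ → ℂ) → ℂ → ℂ) : Prop :=
  ∀ j c g, (∀ m, Differentiable ℝ (g m)) →
    T j (coordProd c g) = coordProd c (update g j (t j (g j)))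

lemma actsCoordwise_opb (a : Fin n → ℝ) : ActsCoordwise (opb a) (fun j => opb1 (a j)) := by
  intro j c g hg
  funext W
  beta_reduce
  rw [opb, wdz, fderiv_coordProd_single c hg W j 1, fderiv_coordProd_single c hg W j I,
    coordProd_update, coordProd_eq_mul_prod_erase c g j W, opb1, wirtingerDz]
  ring

lemma actsCoordwise_opbbar (a : Fin n → ℝ) :
    ActsCoordwise (opbbar a) (fun j => opbbar1 (a j)) := by
  intro j c g hg
  funext W
  beta_reduce
  rw [opbbar, wdzbar, fderiv_coordProd_single c hg W j 1, fderiv_coordProd_single c hg W j I,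
    coordProd_update, coordProd_eq_mul_prod_erase c g j W, opbbar1, wirtingerDzbar]
  ring

section ActsCoordwise

variable {T : Fin n → ((Fin n → ℂ) → ℂ) → (Fin n → ℂ) → ℂ} {t : Fin n → (ℂ → ℂ) → ℂ → ℂ}

lemma ActsCoordwise.iterate_coordProd (hT : ActsCoordwise T t) (j : Fin n) (s : ℕ) (c : ℂ)
    {g : Fin n → ℂ → ℂ} (hg : ∀ m r, Differentiable ℝ ((t m)^[r] (g m))) :
    (T j)^[s] (coordProd c g) = coordProd c (update g j ((t j)^[s] (g j))) := by
  induction s with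
  | zero => simp
  | succ s ih =>
    rw [iterate_succ_apply', ih, hT, update_self, update_idem, iterate_succ_apply']
    intro m
    rcases eq_or_ne m j with rfl | hm
    · simpa using hg m s
    · simpa [update_of_ne hm] using hg m 0

lemma ActsCoordwise.foldr_iterate_coordProd (hT : ActsCoordwise T t) (k : Fin n → ℕ)
    (l : List (Fin n)) (hl : l.Nodup) (c : ℂ)
    {g : Fin n → ℂ → ℂ} (hg : ∀ m s, Differentiable ℝ ((t m)^[s] (g m))) :
    (l.map fun j => (T j)^[k j]).foldr (· ∘ ·) id (coordProd c g)
      = coordProd c (fun m => if m ∈ l then (t m)^[k m] (g m) else g m) := by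
  induction l with
  | nil => simp
  | cons j l ih =>
    have hj : j ∉ l := (List.nodup_cons.mp hl).1
    rw [List.map_cons, List.foldr_cons, comp_apply, ih hl.of_cons,
      hT.iterate_coordProd j (k j) c fun m s => ?_]
    · congr 1
      funext m
      rcases eq_or_ne m j with rfl | hm
      · simp [hj]
      · simp [hm]
    · by_cases hm : m ∈ l
      · simpa [hm, ← iterate_add_apply] using hg m (s + k m)
      · simpa [hm] using hg m s

end ActsCoordwise

lemma bPow_coordProd (a : Fin n → ℝ) (k : Fin n → ℕ) (c : ℂ) {g : Fin n → ℂ → ℂ}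
    (hg : ∀ m s, Differentiable ℝ ((opb1 (a m))^[s] (g m))) :
    bPow a k (coordProd c g) = coordProd c (fun m => (opb1 (a m))^[k m] (g m)) := by
  simpa [bPow] using (actsCoordwise_opb a).foldr_iterate_coordProd k _ (List.nodup_finRange n) c hg

lemma bbarPow_coordProd (a : Fin n → ℝ) (k : Fin n → ℕ) (c : ℂ) {g : Fin n → ℂ → ℂ}
    (hg : ∀ m s, Differentiable ℝ ((opbbar1 (a m))^[s] (g m))) :
    bbarPow a k (coordProd c g) = coordProd c (fun m => (opbbar1 (a m))^[k m] (g m)) := by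
  simpa [bbarPow] using
    (actsCoordwise_opbbar a).foldr_iterate_coordProd k _ (List.nodup_finRange n) c hg

lemma differentiable_iterate_opb1_leftMonomial (α c : ℂ) (p s : ℕ) :
    Differentiable ℝ ((opb1 α)^[s] (leftMonomial α c p 0)) := by
  rw [iterate_opb1_leftMonomial]
  exact Differentiable.fun_sum fun i _ => (differentiable_leftMonomial _ _ _ _).const_mul _

lemma differentiable_iterate_opbbar1_rightMonomial (α c : ℂ) (s : ℕ) :
    Differentiable ℝ ((opbbar1 α)^[s] (rightMonomial α c 0)) := by
  rw [iterate_opbbar1_rightMonomial]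
  exact (differentiable_rightMonomial _ _ _).const_mul _

lemma rightMonomial_zero (α w z : ℂ) :
    rightMonomial α w 0 z
      = exp (-(1 / 4) * (α * ((‖w‖ ^ 2 : ℝ) + (‖z‖ ^ 2 : ℝ) - 2 * w * conj z))) := by
  simp only [rightMonomial, gaussMonomial, pow_zero, one_mul, ofReal_pow, ← mul_conj']
  congr 1
  ring

lemma leftMonomial_zero_zero (α c z : ℂ) :
    leftMonomial α c 0 0 z
      = exp (-(1 / 4) * (α * ((‖z‖ ^ 2 : ℝ) + (‖c‖ ^ 2 : ℝ) - 2 * z * conj c))) := by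
  simp only [leftMonomial, gaussMonomial, pow_zero, one_mul, ofReal_pow, ← mul_conj']
  congr 1
  ring

lemma bergman_eq_coordProd (a : Fin n → ℝ) (W : Fin n → ℂ) :
    (fun W' => bergman a W W')
      = coordProd ((((2 * Real.pi) ^ n)⁻¹ * ∏ j, a j : ℝ) : ℂ)
          (fun m => rightMonomial (a m) (W m) 0) := by
  funext W'
  simp only [bergman, coordProd, rightMonomial_zero, ← exp_sum, mul_sum]

lemma bbarPow_bergman (a : Fin n → ℝ) (k : Fin n → ℕ) (Z' : Fin n → ℂ) :
    (fun W => bbarPow a k (fun W' => bergman a W W') Z')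
      = coordProd (((((2 * Real.pi) ^ n)⁻¹ * ∏ j, a j : ℝ) : ℂ) * ∏ m, (a m : ℂ) ^ k m)
          (fun m => leftMonomial (a m) (Z' m) (k m) 0) := by
  funext W
  rw [bergman_eq_coordProd,
    bbarPow_coordProd a k _ fun m => differentiable_iterate_opbbar1_rightMonomial _ _]
  simp only [coordProd, iterate_opbbar1_rightMonomial, neg_pow_mul_rightMonomial,
    prod_mul_distrib]
  ring

end LandauLevel

open LandauLevel in
theorem PLam_explicit_formula_general
    (n : ℕ) (a : Fin n → ℝ) (ha : ∀ j, 0 < a j)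
    (k : Fin n → ℕ) (Z Z' : Fin n → ℂ) :
    PLam a k Z Z'
      = ((((2 * Real.pi) ^ n)⁻¹ : ℝ) : ℂ) *
        (∏ j, (a j : ℂ) *
          laguerre 0 (k j) ((a j : ℂ) * ((‖Z j - Z' j‖ ^ 2 : ℝ) : ℂ) / 2)) *
        Complex.exp (-(1 / 4 : ℂ) * ∑ m, (a m : ℂ) *
          (((‖Z m‖ ^ 2 : ℝ) : ℂ) + ((‖Z' m‖ ^ 2 : ℝ) : ℂ) -
            2 * Z m * (starRingEnd ℂ) (Z' m))) := by
  rw [PLam, bbarPow_bergman,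
    bPow_coordProd a k _ fun m => differentiable_iterate_opb1_leftMonomial _ _ _]
  simp only [coordProd, iterate_opb1_leftMonomial_self, leftMonomial_zero_zero, prod_mul_distrib,
    exp_sum, mul_sum]
  have hN : (((2 ^ (∑ j, k j) * (∏ j, a j ^ k j) * ∏ j, ((k j)! : ℝ)) : ℝ) : ℂ) ≠ 0 :=
    ofReal_ne_zero.mpr (mul_pos (mul_pos (by positivity) (prod_pos fun j _ => pow_pos (ha j) _))
      (prod_pos fun j _ => by positivity)).ne'
  rw [← prod_pow_eq_pow_sum] at hN
  rw [ofReal_inv, ← prod_pow_eq_pow_sum]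
  push_cast at hN ⊢
  field_simp
  rw [div_eq_iff hN]
  ring

theorem PLam_explicit_formula
    (n : ℕ) (hn : 1 ≤ n) (a : Fin n → ℝ) (ha : ∀ j, 0 < a j)
    (k : Fin n → ℕ) (Z Z' : Fin n → ℂ) :
    PLam a k Z Z'
      = ((((2 * Real.pi) ^ n)⁻¹ : ℝ) : ℂ) *
        (∏ j, (a j : ℂ) *
          laguerre 0 (k j) ((a j : ℂ) * ((‖Z j - Z' j‖ ^ 2 : ℝ) : ℂ) / 2)) *
        Complex.exp (-(1 / 4 : ℂ) * ∑ m, (a m : ℂ) *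
          (((‖Z m‖ ^ 2 : ℝ) : ℂ) + ((‖Z' m‖ ^ 2 : ℝ) : ℂ) -
            2 * Z m * (starRingEnd ℂ) (Z' m))) :=
  PLam_explicit_formula_general n a ha k Z Z'
end
end
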